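/- Let (X,d) be a finite ultrametric space with |X| ≥ 2 such that |Sp(X)| = |X| − 1. Then the diametral graph G_d of (X,d) is complete bipartite; that is, the equivalence relation on X defined by x ≈ y iff d(x,y) < diam X has exactly two equivalence classes. -/
import Mathlib


/-- The spectrum of a metric space: the set of nonzero distances realized
between distinct points. -/
def spec {X : Type*} [MetricSpace X] (A : Set X) : Set ℝ :=
  {r : ℝ | ∃ x ∈ A, ∃ y ∈ A, x ≠ y ∧ dist x y = r}

lemma spec_finite {X : Type*} [MetricSpace X] [Fintype X] (A : Set X) :
    (spec A).Finite := by
  have h : spec A ⊆ (fun p : X × X => dist p.1 p.2) '' Set.univ := by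
    rintro r ⟨x, hx, y, hy, hxy, rfl⟩
    exact ⟨(x, y), trivial, rfl⟩
  exact ((Set.toFinite _).image _).subset h

/-- Key counting lemma: a finite ultrametric set on `n` points has at most `n-1` distances. -/
lemma spec_card_le {X : Type*} [MetricSpace X] [Fintype X]
    (hultra : ∀ x y z : X, dist x y ≤ max (dist x z) (dist z y)) :
    ∀ n (A : Set X), A.ncard = n → A.Nonempty → (spec A).ncard + 1 ≤ A.ncard := by
  intro n
  induction n using Nat.strong_induction_on with
  | _ n ih =>
  intro A hn hA
  have hfin : A.Finite := Set.toFinite A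
  have hpos : 0 < A.ncard := (Set.ncard_pos hfin).2 hA
  rcases lt_or_ge 1 A.ncard with h2 | h1
  · -- at least two points
    obtain ⟨p, hp, hmax'⟩ := Set.exists_max_image (A ×ˢ A) (fun p => dist p.1 p.2)
      (hfin.prod hfin) (hA.prod hA)
    obtain ⟨ha, hb⟩ := Set.mem_prod.1 hp
    set a := p.1
    set b := p.2
    set D := dist a b with hD
    have hmax : ∀ x ∈ A, ∀ y ∈ A, dist x y ≤ D := fun x hx y hy =>
      hmax' (x, y) (Set.mem_prod.2 ⟨hx, hy⟩)
    have hDpos : 0 < D := by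
      obtain ⟨x, hx, y, hy, hxy⟩ := (Set.one_lt_ncard hfin).1 h2
      exact lt_of_lt_of_le (dist_pos.2 hxy) (hmax x hx y hy)
    set A₁ : Set X := {x ∈ A | dist x a < D} with hA₁
    set A₂ : Set X := {x ∈ A | ¬ dist x a < D} with hA₂
    have haA₁ : a ∈ A₁ := ⟨ha, by simpa using hDpos⟩
    have hbA₂ : b ∈ A₂ := ⟨hb, by rw [dist_comm]; exact lt_irrefl D⟩
    have hsub1 : A₁ ⊆ A := fun x hx => hx.1
    have hsub2 : A₂ ⊆ A := fun x hx => hx.1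
    -- cross distances equal D
    have hcross : ∀ x ∈ A₁, ∀ y ∈ A₂, dist x y = D := by
      intro x hx y hy
      have h1 : dist y a = D := le_antisymm (hmax y hy.1 a ha) (not_lt.1 hy.2)
      have h2 : dist y a ≤ max (dist y x) (dist x a) := hultra y a x
      rw [h1] at h2
      have h3 : D ≤ dist y x := by
        rcases max_cases (dist y x) (dist x a) with ⟨he, -⟩ | ⟨he, -⟩
        · rwa [he] at h2
        · rw [he] at h2; exact absurd (lt_of_le_of_lt h2 hx.2) (lt_irrefl D)
      rw [dist_comm]
      exact le_antisymm (hmax y hy.1 x hx.1) h3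
    -- spectrum splits
    have hsplit : spec A ⊆ spec A₁ ∪ spec A₂ ∪ {D} := by
      rintro r ⟨x, hx, y, hy, hxy, rfl⟩
      by_cases hx1 : dist x a < D <;> by_cases hy1 : dist y a < D
      · exact Or.inl (Or.inl ⟨x, ⟨hx, hx1⟩, y, ⟨hy, hy1⟩, hxy, rfl⟩)
      · exact Or.inr (hcross x ⟨hx, hx1⟩ y ⟨hy, hy1⟩)
      · exact Or.inr (by rw [dist_comm]; exact hcross y ⟨hy, hy1⟩ x ⟨hx, hx1⟩)
      · exact Or.inl (Or.inr ⟨x, ⟨hx, hx1⟩, y, ⟨hy, hy1⟩, hxy, rfl⟩)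
    -- cardinalities
    have hlt1 : A₁.ncard < n := by
      rw [← hn]
      exact Set.ncard_lt_ncard ⟨hsub1, fun h => hbA₂.2 (h hb).2⟩ hfin
    have hlt2 : A₂.ncard < n := by
      rw [← hn]
      exact Set.ncard_lt_ncard ⟨hsub2, fun h => (h ha).2 haA₁.2⟩ hfin
    have ih1 := ih A₁.ncard hlt1 A₁ rfl ⟨a, haA₁⟩
    have ih2 := ih A₂.ncard hlt2 A₂ rfl ⟨b, hbA₂⟩
    have hdisj : Disjoint A₁ A₂ := by
      rw [Set.disjoint_left]
      rintro x ⟨-, hx1⟩ ⟨-, hx2⟩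
      exact hx2 hx1
    have hunion : A₁ ∪ A₂ = A := by
      ext x
      constructor
      · rintro (h | h) <;> exact h.1
      · intro hx; by_cases h : dist x a < D
        · exact Or.inl ⟨hx, h⟩
        · exact Or.inr ⟨hx, h⟩
    have hsum : A₁.ncard + A₂.ncard = A.ncard := by
      rw [← Set.ncard_union_eq hdisj (Set.toFinite _) (Set.toFinite _), hunion]
    have hb1 : (spec A).ncard ≤ (spec A₁).ncard + (spec A₂).ncard + 1 :=
      calc (spec A).ncard ≤ (spec A₁ ∪ spec A₂ ∪ {D}).ncard :=
            Set.ncard_le_ncard hsplit (((spec_finite A₁).union (spec_finite A₂)).union (Set.finite_singleton D))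
        _ ≤ (spec A₁ ∪ spec A₂).ncard + ({D} : Set ℝ).ncard := Set.ncard_union_le _ _
        _ ≤ (spec A₁).ncard + (spec A₂).ncard + 1 := by
            have := Set.ncard_union_le (spec A₁) (spec A₂)
            simp only [Set.ncard_singleton]
            omega
    omega
  · -- singleton
    have h1 : A.ncard = 1 := le_antisymm h1 hpos
    obtain ⟨a, rfl⟩ := Set.ncard_eq_one.1 h1
    have he : spec ({a} : Set X) = ∅ := by
      ext r
      simp only [spec, Set.mem_setOf_eq, Set.mem_singleton_iff, Set.mem_empty_iff_false,
        iff_false]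
      rintro ⟨x, rfl, y, rfl, hxy, -⟩
      exact hxy rfl
    rw [he, Set.ncard_empty, h1]

/-- If three points are pairwise at maximal distance `D`, then the spectrum is small. -/
lemma three_classes {X : Type*} [MetricSpace X] [Fintype X]
    (hultra : ∀ x y z : X, dist x y ≤ max (dist x z) (dist z y))
    (D : ℝ) (hmax : ∀ x y : X, dist x y ≤ D)
    (a u v : X) (hau : dist a u = D) (hav : dist a v = D) (huv : dist u v = D)
    (hDpos : 0 < D) :
    (spec (Set.univ : Set X)).ncard + 2 ≤ Fintype.card X := by
  -- helper: propagate maximal distances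
  have hstep : ∀ p q x : X, dist p q = D → dist x p < D → dist x q = D := by
    intro p q x hpq hxp
    have h2 : dist p q ≤ max (dist p x) (dist x q) := hultra p q x
    rw [hpq] at h2
    refine le_antisymm (hmax x q) ?_
    rcases max_cases (dist p x) (dist x q) with ⟨he, -⟩ | ⟨he, -⟩
    · rw [he] at h2; rw [dist_comm] at hxp
      exact absurd (lt_of_le_of_lt h2 hxp) (lt_irrefl D)
    · rwa [he] at h2
  set A : Set X := {x | dist x a < D} with hAdef
  set B : Set X := {x | dist x u < D} with hBdef
  set R : Set X := {x | ¬ dist x a < D ∧ ¬ dist x u < D} with hRdef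
  have haA : a ∈ A := by simpa [hAdef] using hDpos
  have huB : u ∈ B := by simpa [hBdef] using hDpos
  have hvR : v ∈ R := by
    constructor
    · rw [dist_comm, hav]; exact lt_irrefl D
    · rw [dist_comm, huv]; exact lt_irrefl D
  -- cross distances all equal D
  have hAB : ∀ x ∈ A, ∀ y ∈ B, dist x y = D := by
    intro x hx y hy
    have h1 : dist x u = D := hstep a u x hau hx
    have h2 : dist y x = D := hstep u x y (by rw [dist_comm]; exact h1) hy
    rw [dist_comm]; exact h2
  have hAR : ∀ x ∈ A, ∀ y ∈ R, dist x y = D := by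
    intro x hx y hy
    have h1 : dist a y = D := by
      rw [dist_comm]; exact le_antisymm (hmax y a) (not_lt.1 hy.1)
    exact hstep a y x h1 hx
  have hBR : ∀ x ∈ B, ∀ y ∈ R, dist x y = D := by
    intro x hx y hy
    have h1 : dist u y = D := by
      rw [dist_comm]; exact le_antisymm (hmax y u) (not_lt.1 hy.2)
    exact hstep u y x h1 hx
  -- spectrum splits in four pieces
  have hsplit : spec (Set.univ : Set X) ⊆ spec A ∪ spec B ∪ spec R ∪ {D} := by
    rintro r ⟨x, -, y, -, hxy, rfl⟩
    by_cases hxA : dist x a < D <;> by_cases hyA : dist y a < D <;>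
      by_cases hxB : dist x u < D <;> by_cases hyB : dist y u < D
    all_goals first
      | exact Or.inl (Or.inl (Or.inl ⟨x, hxA, y, hyA, hxy, rfl⟩))
      | exact Or.inl (Or.inl (Or.inr ⟨x, hxB, y, hyB, hxy, rfl⟩))
      | exact Or.inl (Or.inr ⟨x, ⟨hxA, hxB⟩, y, ⟨hyA, hyB⟩, hxy, rfl⟩)
      | exact Or.inr (hAB x hxA y hyB)
      | exact Or.inr (by rw [dist_comm]; exact hAB y hyA x hxB)
      | exact Or.inr (hAR x hxA y ⟨hyA, hyB⟩)
      | exact Or.inr (by rw [dist_comm]; exact hAR y hyA x ⟨hxA, hxB⟩)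
      | exact Or.inr (hBR x hxB y ⟨hyA, hyB⟩)
      | exact Or.inr (by rw [dist_comm]; exact hBR y hyB x ⟨hxA, hxB⟩)
  -- note A ∩ B = ∅
  have hABdisj : Disjoint A B := by
    rw [Set.disjoint_left]
    intro x hxA hxB
    have : dist a u ≤ max (dist a x) (dist x u) := hultra a u x
    rw [hau, dist_comm a x] at this
    have : D < D := lt_of_le_of_lt this (max_lt hxA hxB)
    exact absurd this (lt_irrefl D)
  have hRdisj : Disjoint (A ∪ B) R := by
    rw [Set.disjoint_left]
    rintro x (hx | hx) hxR
    · exact hxR.1 hx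
    · exact hxR.2 hx
  have hunion : A ∪ B ∪ R = Set.univ := by
    ext x
    simp only [Set.mem_univ, iff_true, Set.mem_union]
    by_cases h1 : dist x a < D
    · exact Or.inl (Or.inl h1)
    · by_cases h2 : dist x u < D
      · exact Or.inl (Or.inr h2)
      · exact Or.inr ⟨h1, h2⟩
  have hsum : A.ncard + B.ncard + R.ncard = Fintype.card X := by
    have e1 : (A ∪ B).ncard = A.ncard + B.ncard :=
      Set.ncard_union_eq hABdisj (Set.toFinite _) (Set.toFinite _)
    have e2 : (A ∪ B ∪ R).ncard = (A ∪ B).ncard + R.ncard :=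
      Set.ncard_union_eq hRdisj (Set.toFinite _) (Set.toFinite _)
    rw [hunion] at e2
    rw [← e1, ← e2, Set.ncard_univ, Nat.card_eq_fintype_card]
  have ihA := spec_card_le hultra A.ncard A rfl ⟨a, haA⟩
  have ihB := spec_card_le hultra B.ncard B rfl ⟨u, huB⟩
  have ihR := spec_card_le hultra R.ncard R rfl ⟨v, hvR⟩
  have hb1 : (spec (Set.univ : Set X)).ncard ≤
      (spec A).ncard + (spec B).ncard + (spec R).ncard + 1 :=
    calc (spec (Set.univ : Set X)).ncard
        ≤ (spec A ∪ spec B ∪ spec R ∪ {D}).ncard :=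
          Set.ncard_le_ncard hsplit
            ((((spec_finite A).union (spec_finite B)).union (spec_finite R)).union
              (Set.finite_singleton D))
      _ ≤ (spec A ∪ spec B ∪ spec R).ncard + ({D} : Set ℝ).ncard := Set.ncard_union_le _ _
      _ ≤ (spec A).ncard + (spec B).ncard + (spec R).ncard + 1 := by
          have h1 := Set.ncard_union_le (spec A ∪ spec B) (spec R)
          have h2 := Set.ncard_union_le (spec A) (spec B)
          simp only [Set.ncard_singleton]
          omega
  omega

/-- If `(X,d)` is a finite ultrametric space with `|X| ≥ 2` and
`|Sp(X)| = |X| − 1`, then the diametral graph of `(X,d)` is complete bipartite: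
`X` splits into two disjoint nonempty parts `X₁, X₂` such that `d(u,v) = diam X`
holds exactly when `u` and `v` lie in different parts. -/
theorem stmt3 {X : Type*} [MetricSpace X] [Fintype X]
    (hultra : ∀ x y z : X, dist x y ≤ max (dist x z) (dist z y))
    (hcard : 2 ≤ Fintype.card X)
    (hspec : (spec (Set.univ : Set X)).ncard = Fintype.card X - 1) :
    ∃ X₁ X₂ : Set X, X₁.Nonempty ∧ X₂.Nonempty ∧ X₁ ∩ X₂ = ∅ ∧ X₁ ∪ X₂ = Set.univ ∧
      ∀ u v : X, dist u v = Metric.diam (Set.univ : Set X) ↔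
        ((u ∈ X₁ ∧ v ∈ X₂) ∨ (u ∈ X₂ ∧ v ∈ X₁)) := by
  have hne : Nonempty X := Fintype.card_pos_iff.1 (by omega)
  -- find a diametral pair
  obtain ⟨p, -, hmax'⟩ := Set.exists_max_image ((Set.univ : Set X) ×ˢ Set.univ)
    (fun p => dist p.1 p.2) (Set.toFinite _)
    (Set.univ_nonempty.prod Set.univ_nonempty)
  set a := p.1
  set b := p.2
  set D := dist a b with hDdef
  have hmax : ∀ x y : X, dist x y ≤ D := fun x y => hmax' (x, y) (by simp)
  have hDpos : 0 < D := by
    obtain ⟨x, y, hxy⟩ := Fintype.exists_pair_of_one_lt_card (α := X) (by omega)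
    exact lt_of_lt_of_le (dist_pos.2 hxy) (hmax x y)
  have hdiam : Metric.diam (Set.univ : Set X) = D := by
    refine le_antisymm (Metric.diam_le_of_forall_dist_le hDpos.le
      (fun x _ y _ => hmax x y)) ?_
    exact Metric.dist_le_diam_of_mem (Set.toFinite _).isBounded trivial trivial
  refine ⟨{x | dist x a < D}, {x | ¬ dist x a < D}, ⟨a, by simpa using hDpos⟩,
    ⟨b, by simp only [Set.mem_setOf_eq, dist_comm b a]; exact lt_irrefl D⟩, ?_, ?_, ?_⟩
  · ext x
    simp only [Set.mem_inter_iff, Set.mem_setOf_eq, Set.mem_empty_iff_false, iff_false]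
    rintro ⟨h1, h2⟩; exact h2 h1
  · ext x
    simp only [Set.mem_union, Set.mem_setOf_eq, Set.mem_univ, iff_true]
    exact em _
  · intro u v
    rw [hdiam]
    constructor
    · intro huv
      by_cases hu : dist u a < D <;> by_cases hv : dist v a < D
      · -- both in X₁ : contradiction
        exfalso
        have h := hultra u v a
        rw [huv, dist_comm a v] at h
        exact absurd (lt_of_le_of_lt h (max_lt hu hv)) (lt_irrefl D)
      · exact Or.inl ⟨hu, hv⟩
      · exact Or.inr ⟨hu, hv⟩
      · -- both in X₂ : contradicts the counting
        exfalso
        have hau : dist a u = D := by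
          rw [dist_comm]; exact le_antisymm (hmax u a) (not_lt.1 hu)
        have hav : dist a v = D := by
          rw [dist_comm]; exact le_antisymm (hmax v a) (not_lt.1 hv)
        have := three_classes hultra D hmax a u v hau hav huv hDpos
        omega
    · rintro (⟨hu, hv⟩ | ⟨hu, hv⟩)
      · have hva : dist v a = D := le_antisymm (hmax v a) (not_lt.1 hv)
        have h := hultra v a u
        rw [hva] at h
        refine le_antisymm (hmax u v) ?_
        rw [dist_comm]
        rcases max_cases (dist v u) (dist u a) with ⟨he, -⟩ | ⟨he, -⟩
        · rwa [he] at h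
        · rw [he] at h; exact absurd (lt_of_le_of_lt h hu) (lt_irrefl D)
      · have hua : dist u a = D := le_antisymm (hmax u a) (not_lt.1 hu)
        have h := hultra u a v
        rw [hua] at h
        refine le_antisymm (hmax u v) ?_
        rcases max_cases (dist u v) (dist v a) with ⟨he, -⟩ | ⟨he, -⟩
        · rwa [he] at h
        · rw [he] at h; exact absurd (lt_of_le_of_lt h hv) (lt_irrefl D)
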